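/- A biased graph (G,B) is a signed graph, i.e., there exists a subset Sigma of the edges of G such that a cycle C is balanced exactly when |E(C) ∩ Sigma| is even, if and only if (G,B) contains no contrabalanced theta subgraph (a theta subgraph all three of whose cycles are unbalanced). -/

import Mathlib

/-! Common definitions: multigraphs, walks, biased graphs, frame matroids. -/

universe u v

structure Multigraph (V : Type u) (E : Type v) where
  inc : E → Sym2 V

namespace Multigraph

variable {V : Type u} {E : Type v}

/-- An edge is a loop if its two endpoints coincide. -/
def IsLoop (G : Multigraph V E) (e : E) : Prop := (G.inc e).IsDiag

/-- The set of links (non-loop edges) incident to a vertex. -/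
def delta (G : Multigraph V E) (x : V) : Set E := {e | x ∈ G.inc e ∧ ¬ G.IsLoop e}

/-- The set of all edges (including loops) incident to a vertex. -/
def deltaPlus (G : Multigraph V E) (x : V) : Set E := {e | x ∈ G.inc e}

/-- The set of vertices incident with an edge of `X`. -/
def VSet (G : Multigraph V E) (X : Set E) : Set V := {x | ∃ e ∈ X, x ∈ G.inc e}

/-- Walks in a multigraph. -/
inductive Walk (G : Multigraph V E) : V → V → Type (max u v) where
  | nil (x : V) : Walk G x x
  | cons {x y z : V} (e : E) (h : G.inc e = s(x, y)) (t : Walk G y z) : Walk G x z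

namespace Walk

variable {G : Multigraph V E}

/-- The list of edges of a walk. -/
def edgeList : {x y : V} → G.Walk x y → List E
  | _, _, .nil _ => []
  | _, _, .cons e _ t => e :: t.edgeList

/-- The list of vertices of a walk (both endpoints included). -/
def vertList : {x y : V} → G.Walk x y → List V
  | _, _, .nil a => [a]
  | a, _, .cons _ _ t => a :: t.vertList

/-- The edge set of a walk. -/
def edgeSet {x y : V} (w : G.Walk x y) : Set E := {e | e ∈ w.edgeList}

/-- A walk is a path if it repeats no vertex. -/
def IsPath {x y : V} (w : G.Walk x y) : Prop := w.vertList.Nodup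

/-- A closed walk is a cycle if it is nonempty, repeats no edge and repeats
no vertex except for its starting vertex.  (A loop gives a cycle of length one.) -/
def IsCycle {x : V} (w : G.Walk x x) : Prop :=
  w.edgeList ≠ [] ∧ w.edgeList.Nodup ∧ w.vertList.dropLast.Nodup

end Walk

/-- `P` is the edge set of a path from `x` to `y`. -/
def IsPathSet (G : Multigraph V E) (x y : V) (P : Set E) : Prop :=
  ∃ w : G.Walk x y, w.IsPath ∧ w.edgeSet = P

/-- `C` is the edge set of a cycle. -/
def IsCycleSet (G : Multigraph V E) (C : Set E) : Prop :=
  ∃ (x : V) (w : G.Walk x x), w.IsCycle ∧ w.edgeSet = C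

/-- Two vertices are connected using only edges of `X`. -/
def ConnectedTo (G : Multigraph V E) (X : Set E) (x y : V) : Prop :=
  ∃ w : G.Walk x y, w.edgeSet ⊆ X

/-- A multigraph is connected if any two vertices are joined by a walk. -/
def ConnectedGraph (G : Multigraph V E) : Prop := ∀ x y : V, Nonempty (G.Walk x y)

/-- The subgraph induced by an edge set `X` is connected. -/
def SubConnected (G : Multigraph V E) (X : Set E) : Prop :=
  ∀ e ∈ X, ∀ f ∈ X, ∃ x y, x ∈ G.inc e ∧ y ∈ G.inc f ∧ G.ConnectedTo X x y

/-- A theta subgraph: two distinct vertices joined by three internally disjoint paths. -/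
def IsTheta (G : Multigraph V E) (x y : V) (P₁ P₂ P₃ : Set E) : Prop :=
  x ≠ y ∧ G.IsPathSet x y P₁ ∧ G.IsPathSet x y P₂ ∧ G.IsPathSet x y P₃ ∧
    Disjoint P₁ P₂ ∧ Disjoint P₂ P₃ ∧ Disjoint P₁ P₃ ∧
    G.VSet P₁ ∩ G.VSet P₂ ⊆ {x, y} ∧ G.VSet P₂ ∩ G.VSet P₃ ⊆ {x, y} ∧
    G.VSet P₁ ∩ G.VSet P₃ ⊆ {x, y}

/-- A proper separation of a multigraph, given as a partition of the edge set:
each side must contain a vertex not met by the other side. -/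
def IsProperSep (G : Multigraph V E) (X Y : Set E) : Prop :=
  X ∪ Y = Set.univ ∧ Disjoint X Y ∧
    (G.VSet X \ G.VSet Y).Nonempty ∧ (G.VSet Y \ G.VSet X).Nonempty

/-- A multigraph is `k`-connected if it is connected and every proper separation
has order at least `k`. -/
def KConnected (G : Multigraph V E) (k : ℕ) : Prop :=
  G.ConnectedGraph ∧ ∀ X Y : Set E, G.IsProperSep X Y → k ≤ (G.VSet X ∩ G.VSet Y).ncard

/-- The connected component of the edge `e` in the subgraph induced by `X`. -/
def edgeComponent (G : Multigraph V E) (X : Set E) (e : E) : Set E :=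
  {f | f ∈ X ∧ ∃ x y, x ∈ G.inc e ∧ y ∈ G.inc f ∧ G.ConnectedTo X x y}

/-- The set of connected components (as edge sets) of the subgraph induced by `X`. -/
def components (G : Multigraph V E) (X : Set E) : Set (Set E) :=
  {D | ∃ e ∈ X, D = G.edgeComponent X e}

/-- One step of rerouting a `u`-`v` path: replace a subpath `R` (with endpoints `x,y`)
of `P` by an `x`-`y` path `Q` that is internally disjoint from `P`. -/
def RerouteStep (G : Multigraph V E) (u v : V) (P P' : Set E) : Prop :=
  G.IsPathSet u v P ∧ G.IsPathSet u v P' ∧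
    ∃ x y R Q, G.IsPathSet x y R ∧ G.IsPathSet x y Q ∧ R ⊆ P ∧
      Disjoint Q (P \ R) ∧ G.VSet Q ∩ G.VSet P ⊆ {x, y} ∧ P' = (P \ R) ∪ Q

end Multigraph

/-- A biased graph: a multigraph together with a collection of balanced cycles
satisfying the theta property. -/
structure BiasedGraph (V : Type u) (E : Type v) extends Multigraph V E where
  Balanced : Set E → Prop
  balanced_isCycle : ∀ C, Balanced C → toMultigraph.IsCycleSet C
  theta_property : ∀ x y P₁ P₂ P₃, toMultigraph.IsTheta x y P₁ P₂ P₃ →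
    Balanced (P₁ ∪ P₂) → Balanced (P₂ ∪ P₃) → Balanced (P₁ ∪ P₃)

namespace BiasedGraph

variable {V : Type u} {E : Type v}

/-- A balancing vertex: every unbalanced cycle passes through it. -/
def BalancingVertex (Ω : BiasedGraph V E) (u : V) : Prop :=
  ∀ C, Ω.toMultigraph.IsCycleSet C → ¬ Ω.Balanced C → ∃ e ∈ C, u ∈ Ω.inc e

/-- `C` is an unbalanced cycle of `Ω`. -/
def IsUnbalancedCycle (Ω : BiasedGraph V E) (C : Set E) : Prop :=
  Ω.toMultigraph.IsCycleSet C ∧ ¬ Ω.Balanced C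

/-- Every cycle contained in `X` is balanced. -/
def BalancedSub (Ω : BiasedGraph V E) (X : Set E) : Prop :=
  ∀ C ⊆ X, Ω.toMultigraph.IsCycleSet C → Ω.Balanced C

/-- `e ~ f`: either `e = f` or some balanced cycle contains both. -/
def LinkRel (Ω : BiasedGraph V E) (e f : E) : Prop :=
  e = f ∨ ∃ C, Ω.toMultigraph.IsCycleSet C ∧ Ω.Balanced C ∧ e ∈ C ∧ f ∈ C

/-- The same relation, with the balanced cycle restricted to lie inside `A`. -/
def LinkRelIn (Ω : BiasedGraph V E) (A : Set E) (e f : E) : Prop :=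
  e = f ∨ ∃ C, C ⊆ A ∧ Ω.toMultigraph.IsCycleSet C ∧ Ω.Balanced C ∧ e ∈ C ∧ f ∈ C

/-- `S` is an unbalancing class of `delta u`: a (nonempty) equivalence class of `~`. -/
def IsUnbalancingClass (Ω : BiasedGraph V E) (u : V) (S : Set E) : Prop :=
  S.Nonempty ∧ S ⊆ Ω.toMultigraph.delta u ∧
    ∀ e ∈ S, ∀ f ∈ Ω.toMultigraph.delta u, (f ∈ S ↔ Ω.LinkRel e f)

/-- `delta u` has exactly three unbalancing classes within the edge set `A`. -/
def HasThreeClassesIn (Ω : BiasedGraph V E) (u : V) (A : Set E) : Prop :=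
  ∃ e₁ e₂ e₃, e₁ ∈ Ω.toMultigraph.delta u ∩ A ∧ e₂ ∈ Ω.toMultigraph.delta u ∩ A ∧
    e₃ ∈ Ω.toMultigraph.delta u ∩ A ∧
    ¬ Ω.LinkRelIn A e₁ e₂ ∧ ¬ Ω.LinkRelIn A e₁ e₃ ∧ ¬ Ω.LinkRelIn A e₂ e₃ ∧
    ∀ f ∈ Ω.toMultigraph.delta u ∩ A,
      Ω.LinkRelIn A f e₁ ∨ Ω.LinkRelIn A f e₂ ∨ Ω.LinkRelIn A f e₃

/-- Tight handcuffs: two unbalanced cycles meeting in exactly one vertex. -/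
def IsTightHandcuff (Ω : BiasedGraph V E) (X : Set E) : Prop :=
  ∃ C₁ C₂, Ω.IsUnbalancedCycle C₁ ∧ Ω.IsUnbalancedCycle C₂ ∧ Disjoint C₁ C₂ ∧
    (∃ x, Ω.toMultigraph.VSet C₁ ∩ Ω.toMultigraph.VSet C₂ = {x}) ∧ X = C₁ ∪ C₂

/-- Loose handcuffs: two vertex-disjoint unbalanced cycles joined by a path meeting
each cycle only in an endpoint. -/
def IsLooseHandcuff (Ω : BiasedGraph V E) (X : Set E) : Prop :=
  ∃ C₁ C₂ P x y, Ω.IsUnbalancedCycle C₁ ∧ Ω.IsUnbalancedCycle C₂ ∧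
    Disjoint (Ω.toMultigraph.VSet C₁) (Ω.toMultigraph.VSet C₂) ∧
    Ω.toMultigraph.IsPathSet x y P ∧ Disjoint P (C₁ ∪ C₂) ∧
    Ω.toMultigraph.VSet P ∩ Ω.toMultigraph.VSet C₁ = {x} ∧
    Ω.toMultigraph.VSet P ∩ Ω.toMultigraph.VSet C₂ = {y} ∧ X = C₁ ∪ C₂ ∪ P

/-- A contrabalanced theta: a theta subgraph all three of whose cycles are unbalanced. -/
def IsContraTheta (Ω : BiasedGraph V E) (X : Set E) : Prop :=
  ∃ x y P₁ P₂ P₃, Ω.toMultigraph.IsTheta x y P₁ P₂ P₃ ∧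
    ¬ Ω.Balanced (P₁ ∪ P₂) ∧ ¬ Ω.Balanced (P₂ ∪ P₃) ∧ ¬ Ω.Balanced (P₁ ∪ P₃) ∧
    X = P₁ ∪ P₂ ∪ P₃

/-- The circuits of the frame matroid of a biased graph. -/
def FrameCircuit (Ω : BiasedGraph V E) (X : Set E) : Prop :=
  (Ω.toMultigraph.IsCycleSet X ∧ Ω.Balanced X) ∨ Ω.IsTightHandcuff X ∨
    Ω.IsLooseHandcuff X ∨ Ω.IsContraTheta X

/-- The number of balanced components of the subgraph induced by `X`. -/
noncomputable def numBalComponents (Ω : BiasedGraph V E) (X : Set E) : ℕ :=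
  {D | D ∈ Ω.toMultigraph.components X ∧ Ω.BalancedSub D}.ncard

end BiasedGraph

section MatroidDefs

variable {α : Type*}

/-- A circuit of a matroid: a minimal dependent set. -/
def MCircuit (M : Matroid α) (C : Set α) : Prop :=
  C ⊆ M.E ∧ ¬ M.Indep C ∧ ∀ D ⊂ C, M.Indep D

/-- A hyperplane: a maximal proper flat. -/
def MHyperplane (M : Matroid α) (H : Set α) : Prop :=
  M.IsFlat H ∧ H ≠ M.E ∧ ∀ F, M.IsFlat F → H ⊆ F → F = H ∨ F = M.E

/-- A cocircuit: a circuit of the dual matroid. -/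
def MCocircuit (M : Matroid α) (K : Set α) : Prop := MCircuit (Matroid.dual M) K

open scoped Matroid in
/-- Deletion of a set of elements. -/
def MDelete (M : Matroid α) (D : Set α) : Matroid α := M ↾ (M.E \ D)

/-- Contraction of a set of elements. -/
def MContract (M : Matroid α) (C : Set α) : Matroid α :=
  Matroid.dual (MDelete (Matroid.dual M) C)

/-- `N` is a minor of `M`. -/
def IsMinorOf (N M : Matroid α) : Prop := ∃ C D, N = MDelete (MContract M C) D

/-- The rank of a set in a matroid (junk value if unbounded). -/
noncomputable def mRank (M : Matroid α) (X : Set α) : ℕ :=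
  sSup {n : ℕ | ∃ I, M.Indep I ∧ I ⊆ X ∧ I.ncard = n}

/-- A matroid is connected if any two elements lie on a common circuit. -/
def MatroidConnected (M : Matroid α) : Prop :=
  M.E.Nonempty ∧ ∀ e ∈ M.E, ∀ f ∈ M.E, e = f ∨ ∃ C, MCircuit M C ∧ e ∈ C ∧ f ∈ C

/-- A `k`-separation of a matroid. -/
def MatroidKSeparation (M : Matroid α) (X Y : Set α) (k : ℕ) : Prop :=
  X ∪ Y = M.E ∧ Disjoint X Y ∧ k ≤ X.ncard ∧ k ≤ Y.ncard ∧
    mRank M X + mRank M Y + 1 = mRank M M.E + k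

/-- A matroid is 3-connected if it has no `k`-separation for `k < 3`. -/
def Matroid3Connected (M : Matroid α) : Prop :=
  ∀ X Y (k : ℕ), k ≤ 2 → ¬ MatroidKSeparation M X Y k

/-- A matroid is graphic if its circuits are exactly the cycles of some multigraph. -/
def IsGraphic (M : Matroid α) : Prop :=
  ∃ (W : Type) (G : Multigraph W α), ∀ C, MCircuit M C ↔ G.IsCycleSet C

/-- A matroid has a `U_{2,4}` minor. -/
def HasU24Minor (M : Matroid α) : Prop :=
  ∃ N : Matroid α, IsMinorOf N M ∧ N.E.ncard = 4 ∧
    ∀ C, MCircuit N C ↔ C ⊆ N.E ∧ C.ncard = 3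

end MatroidDefs

/-- `M` is the frame matroid of the biased graph `Ω` (on ground set all of `E`). -/
def IsFrameMatroidOf {V E : Type*} (M : Matroid E) (Ω : BiasedGraph V E) : Prop :=
  M.E = Set.univ ∧ ∀ C, MCircuit M C ↔ Ω.FrameCircuit C

open scoped Matroid in
/-- A vertex is committed: the complement of its edge star is a connected
nongraphic hyperplane of the frame matroid. -/
def BiasedGraph.IsCommitted {V E : Type*} (Ω : BiasedGraph V E) (M : Matroid E) (x : V) : Prop :=
  MHyperplane M (Ω.toMultigraph.deltaPlus x)ᶜ ∧
    MatroidConnected (M ↾ (Ω.toMultigraph.deltaPlus x)ᶜ) ∧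
    ¬ IsGraphic (M ↾ (Ω.toMultigraph.deltaPlus x)ᶜ)

/-- `Ω'` is a roll-up of `Ω` at the balancing vertex `u`: some (possibly empty)
unbalancing class of links at `u` is replaced by unbalanced loops at their other endpoints. -/
def BiasedGraph.IsRollUpOf {V E : Type*} (Ω' Ω : BiasedGraph V E) (u : V) : Prop :=
  ∃ S : Set E, (S = ∅ ∨ Ω.IsUnbalancingClass u S) ∧
    (∀ e ∉ S, Ω'.inc e = Ω.inc e) ∧
    (∀ e ∈ S, ∃ w, w ≠ u ∧ Ω.inc e = s(u, w) ∧ Ω'.inc e = s(w, w)) ∧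
    (∀ C, Ω'.Balanced C ↔ (Ω.Balanced C ∧ C ∩ S = ∅))

/-! The three cycles of a theta are such that each is the symmetric difference of the other
two. The theta property forbids a theta with exactly one unbalanced cycle, so excluding
contrabalanced thetas as well says that every theta has an even number of unbalanced cycles; the
same holds for the cycles meeting a fixed edge set `Sg` in an odd number of edges.

Conversely, fix a maximal forest `T` and put `e ∉ T` into `Sg` when its fundamental cycle is
unbalanced. Both parities then agree on fundamental cycles, and a cycle `C` that is not
fundamental forms, with an ear of the fundamental cycle of an edge `e ∈ C \ T`, a theta whose two
other cycles have fewer edges outside `T`; induction on `|C \ T|` finishes. -/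

namespace Multigraph

variable {V : Type u} {E : Type v} {G : Multigraph V E}

namespace Walk

@[simp] theorem edgeList_nil (a : V) : (nil a : G.Walk a a).edgeList = [] := rfl

@[simp] theorem edgeList_cons {x y z : V} (e : E) (h : G.inc e = s(x, y)) (t : G.Walk y z) :
    (cons e h t).edgeList = e :: t.edgeList := rfl

@[simp] theorem vertList_nil (a : V) : (nil a : G.Walk a a).vertList = [a] := rfl

@[simp] theorem vertList_cons {x y z : V} (e : E) (h : G.inc e = s(x, y)) (t : G.Walk y z) :
    (cons e h t).vertList = x :: t.vertList := rfl

theorem vertList_ne_nil {x y : V} (w : G.Walk x y) : w.vertList ≠ [] := by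
  cases w <;> simp

theorem start_mem_vertList {x y : V} (w : G.Walk x y) : x ∈ w.vertList := by
  cases w <;> simp

theorem exists_vertList_eq_cons {x y : V} (w : G.Walk x y) : ∃ l, w.vertList = x :: l := by
  cases w <;> simp

theorem vertList_eq_dropLast_append {x y : V} (w : G.Walk x y) :
    w.vertList = w.vertList.dropLast ++ [y] := by
  induction w with
  | nil a => rfl
  | cons e h t ih => rw [vertList_cons, ih, List.dropLast_cons_of_ne_nil (by simp)]; simp

theorem end_mem_vertList {x y : V} (w : G.Walk x y) : y ∈ w.vertList := by
  rw [vertList_eq_dropLast_append]; simp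

theorem eq_of_edgeList_eq_nil {x y : V} {w : G.Walk x y} (h : w.edgeList = []) : x = y := by
  cases w with
  | nil => rfl
  | cons => simp at h

theorem mem_vertList_of_mem_inc {x y : V} {w : G.Walk x y} {e : E} {v : V}
    (he : e ∈ w.edgeList) (hv : v ∈ G.inc e) : v ∈ w.vertList := by
  induction w with
  | nil a => simp at he
  | cons f h t ih =>
    rcases List.mem_cons.1 he with rfl | he
    · rw [h, Sym2.mem_iff] at hv
      rcases hv with rfl | rfl
      · simp
      · exact List.mem_cons_of_mem _ t.start_mem_vertList
    · exact List.mem_cons_of_mem _ (ih he)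

theorem exists_mem_dropLast_of_mem_edgeList {x y : V} {w : G.Walk x y} {e : E}
    (he : e ∈ w.edgeList) : ∃ v ∈ w.vertList.dropLast, v ∈ G.inc e := by
  induction w with
  | nil a => simp at he
  | @cons x z y f h t ih =>
    rw [vertList_cons, List.dropLast_cons_of_ne_nil t.vertList_ne_nil]
    rcases List.mem_cons.1 he with rfl | he
    · exact ⟨x, by simp, by rw [h]; exact Sym2.mem_mk_left x z⟩
    · obtain ⟨v, hv, hve⟩ := ih he
      exact ⟨v, List.mem_cons_of_mem _ hv, hve⟩

theorem mem_vertList_iff {x y : V} {w : G.Walk x y} {v : V} :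
    v ∈ w.vertList ↔ v = x ∨ v ∈ G.VSet w.edgeSet := by
  refine ⟨fun hv => ?_, ?_⟩
  · induction w with
    | nil => exact Or.inl (List.mem_singleton.1 hv)
    | @cons x z _ f h t ih =>
      rcases List.mem_cons.1 hv with rfl | hv
      · exact Or.inl rfl
      · refine Or.inr ?_
        rcases ih hv with rfl | ⟨e, he, hve⟩
        · exact ⟨f, List.mem_cons_self, by rw [h]; exact Sym2.mem_mk_right _ _⟩
        · exact ⟨e, List.mem_cons_of_mem _ he, hve⟩
  · rintro (rfl | ⟨e, he, hve⟩)
    · exact w.start_mem_vertList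
    · exact mem_vertList_of_mem_inc he hve

def append : {x y z : V} → G.Walk x y → G.Walk y z → G.Walk x z
  | _, _, _, .nil _, w => w
  | _, _, _, .cons e h t, w => .cons e h (t.append w)

@[simp] theorem cons_append {x y y' z : V} (e : E) (h : G.inc e = s(x, y)) (t : G.Walk y y')
    (w : G.Walk y' z) : (cons e h t).append w = cons e h (t.append w) := rfl

@[simp] theorem edgeList_append {x y z : V} (u : G.Walk x y) (w : G.Walk y z) :
    (u.append w).edgeList = u.edgeList ++ w.edgeList := by
  induction u with
  | nil a => rfl
  | cons e h t ih => simp [ih]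

theorem vertList_append {x y z : V} (u : G.Walk x y) (w : G.Walk y z) :
    (u.append w).vertList = u.vertList.dropLast ++ w.vertList := by
  induction u with
  | nil a => rfl
  | cons e h t ih =>
    simp only [cons_append, vertList_cons, ih, List.dropLast_cons_of_ne_nil t.vertList_ne_nil,
      List.cons_append]

def reverse : {x y : V} → G.Walk x y → G.Walk y x
  | _, _, .nil a => .nil a
  | _, _, .cons e h t => t.reverse.append (.cons e (by rw [h, Sym2.eq_swap]) (.nil _))

@[simp] theorem edgeList_reverse {x y : V} (w : G.Walk x y) :
    w.reverse.edgeList = w.edgeList.reverse := by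
  induction w with
  | nil a => rfl
  | cons e h t ih => simp [reverse, ih]

@[simp] theorem vertList_reverse {x y : V} (w : G.Walk x y) :
    w.reverse.vertList = w.vertList.reverse := by
  induction w with
  | nil a => rfl
  | cons e h t ih =>
    obtain ⟨l, hl⟩ := t.exists_vertList_eq_cons
    rw [reverse, vertList_append, ih]
    simp [hl]

theorem exists_eq_append_of_mem_vertList {x y v : V} {w : G.Walk x y} (hv : v ∈ w.vertList) :
    ∃ (w₁ : G.Walk x v) (w₂ : G.Walk v y), w = w₁.append w₂ := by
  induction w with
  | nil a =>
    obtain rfl : v = a := List.mem_singleton.1 hv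
    exact ⟨nil v, nil v, rfl⟩
  | @cons x z y f h t ih =>
    rcases List.mem_cons.1 hv with rfl | hv
    · exact ⟨nil v, cons f h t, rfl⟩
    · obtain ⟨w₁, w₂, rfl⟩ := ih hv
      exact ⟨cons f h w₁, w₂, rfl⟩

theorem exists_eq_append_cons_of_mem_edgeList {x y : V} {w : G.Walk x y} {e : E}
    (he : e ∈ w.edgeList) : ∃ (a b : V) (h : G.inc e = s(a, b)) (w₁ : G.Walk x a)
      (w₂ : G.Walk b y), w = w₁.append (cons e h w₂) := by
  induction w with
  | nil a => simp at he
  | @cons x z y f h t ih =>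
    by_cases hef : e = f
    · subst hef
      exact ⟨x, z, h, nil x, t, rfl⟩
    · obtain ⟨a, b, h', w₁, w₂, rfl⟩ := ih ((List.mem_cons.1 he).resolve_left hef)
      exact ⟨a, b, h', cons f h w₁, w₂, rfl⟩

theorem IsPath.edgeList_nodup {x y : V} {w : G.Walk x y} (hw : w.IsPath) :
    w.edgeList.Nodup := by
  induction w with
  | nil a => simp
  | @cons x z y f h t ih =>
    obtain ⟨hx, ht⟩ := List.nodup_cons.1 (hw : (x :: t.vertList).Nodup)
    exact List.nodup_cons.2
      ⟨fun hf => hx (mem_vertList_of_mem_inc hf (by rw [h]; exact Sym2.mem_mk_left x z)), ih ht⟩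

theorem IsPath.reverse {x y : V} {w : G.Walk x y} (hw : w.IsPath) : w.reverse.IsPath := by
  unfold IsPath
  rw [vertList_reverse]
  exact List.nodup_reverse.2 hw

theorem IsPath.of_append_left {x y z : V} {u : G.Walk x y} {w : G.Walk y z}
    (h : (u.append w).IsPath) : u.IsPath := by
  unfold IsPath at h ⊢
  rw [vertList_append] at h
  rw [vertList_eq_dropLast_append]
  exact h.sublist ((List.singleton_sublist.2 w.start_mem_vertList).append_left _)

theorem IsPath.of_append_right {x y z : V} {u : G.Walk x y} {w : G.Walk y z}
    (h : (u.append w).IsPath) : w.IsPath := by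
  unfold IsPath at h
  rw [vertList_append] at h
  exact h.of_append_right

theorem IsPath.eq_nil {x : V} {w : G.Walk x x} (hw : w.IsPath) : w.edgeList = [] := by
  cases w with
  | nil => rfl
  | cons f h t => exact absurd t.end_mem_vertList (List.nodup_cons.1 hw).1

theorem IsPath.mem_edgeList_of_subset {x y : V} {q p : G.Walk x y} (hq : q.IsPath)
    (hp : p.IsPath) (hqp : ∀ e ∈ q.edgeList, e ∈ p.edgeList) {e : E} (he : e ∈ p.edgeList) :
    e ∈ q.edgeList := by
  induction q with
  | nil a => rw [hp.eq_nil] at he; simp at he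
  | @cons x z y f hf t ih =>
    cases p with
    | nil => simp at he
    | @cons _ w _ g hg p' =>
      have hx : x ∉ p'.vertList := (List.nodup_cons.1 hp).1
      have hfg : f = g := by
        refine (List.mem_cons.1 (hqp f List.mem_cons_self)).resolve_right fun hf' => hx ?_
        exact mem_vertList_of_mem_inc hf' (by rw [hf]; exact Sym2.mem_mk_left x z)
      subst hfg
      obtain rfl : z = w := Sym2.congr_right.1 (hf.symm.trans hg)
      have hft : f ∉ t.edgeList := (List.nodup_cons.1 hq.edgeList_nodup).1
      have htp : ∀ e ∈ t.edgeList, e ∈ p'.edgeList := fun e' he' =>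
        (List.mem_cons.1 (hqp e' (List.mem_cons_of_mem _ he'))).resolve_left
          fun h => hft (h ▸ he')
      rcases List.mem_cons.1 he with rfl | he
      · exact List.mem_cons_self
      · exact List.mem_cons_of_mem _ (ih (List.nodup_cons.1 hq).2 (List.nodup_cons.1 hp).2 htp he)

theorem mem_vertList_append_left {x y z : V} (u : G.Walk x y) (w : G.Walk y z) {v : V}
    (hv : v ∈ u.vertList) : v ∈ (u.append w).vertList := by
  rw [vertList_eq_dropLast_append, List.mem_append, List.mem_singleton] at hv
  rw [vertList_append, List.mem_append]
  exact hv.imp id fun (h : v = y) => h ▸ w.start_mem_vertList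

theorem exists_eq_append_of_first_mem {c b : V} (q : G.Walk c b) {S : Set V} (hb : b ∈ S) :
    ∃ y ∈ S, ∃ (w : G.Walk c y) (r : G.Walk y b), q = w.append r ∧
      ∀ v ∈ w.vertList.dropLast, v ∉ S := by
  induction q with
  | nil a => exact ⟨a, hb, nil a, nil a, rfl, by simp⟩
  | @cons c d b f h t ih =>
    by_cases hc : c ∈ S
    · exact ⟨c, hc, nil c, cons f h t, rfl, by simp⟩
    · obtain ⟨y, hy, w, r, rfl, hw⟩ := ih hb
      refine ⟨y, hy, cons f h w, r, rfl, ?_⟩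
      rw [vertList_cons, List.dropLast_cons_of_ne_nil w.vertList_ne_nil]
      exact List.forall_mem_cons.2 ⟨hc, hw⟩

theorem IsPath.exists_ear {S : Set V} {D : Set E} (hD : G.VSet D ⊆ S) {c b : V}
    {q : G.Walk c b} (hq : q.IsPath) (hc : c ∈ S) (hb : b ∈ S) (hqD : ∃ f ∈ q.edgeList, f ∉ D) :
    ∃ x y Q, x ≠ y ∧ x ∈ S ∧ y ∈ S ∧ G.IsPathSet x y Q ∧ Q ⊆ q.edgeSet ∧ Disjoint Q D ∧
      G.VSet Q ∩ S ⊆ {x, y} := by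
  induction q with
  | nil => simp at hqD
  | @cons c d b f h t ih =>
    obtain ⟨hct, ht⟩ := List.nodup_cons.1 (hq : (c :: t.vertList).Nodup)
    by_cases hfD : f ∈ D
    · have hd : d ∈ S := hD ⟨f, hfD, by rw [h]; exact Sym2.mem_mk_right c d⟩
      obtain ⟨g, hg, hgD⟩ := hqD
      have hgt : g ∈ t.edgeList := (List.mem_cons.1 hg).resolve_left fun h => hgD (h ▸ hfD)
      obtain ⟨x, y, Q, hxy, hx, hy, hQ, hQt, hQD, hQS⟩ := ih ht hd hb ⟨g, hgt, hgD⟩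
      exact ⟨x, y, Q, hxy, hx, hy, hQ, hQt.trans fun e he => List.mem_cons_of_mem f he, hQD, hQS⟩
    -- the ear runs from `c` through `f` and along `t` up to its first vertex in `S`
    obtain ⟨y, hy, w, r, rfl, hw⟩ := t.exists_eq_append_of_first_mem hb
    have hcw : c ∉ w.vertList := fun h => hct (mem_vertList_append_left w r h)
    refine ⟨c, y, (cons f h w).edgeSet, fun h => hcw (h ▸ w.end_mem_vertList), hc, hy,
      ⟨cons f h w, List.nodup_cons.2 ⟨hcw, IsPath.of_append_left ht⟩, rfl⟩, ?_, ?_, ?_⟩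
    · intro e he
      simp only [Walk.edgeSet, Set.mem_ofPred_eq, edgeList_cons, edgeList_append, List.mem_cons,
        List.mem_append] at he ⊢
      tauto
    · refine Set.disjoint_left.2 fun e he heD => ?_
      rcases List.mem_cons.1 he with rfl | he
      · exact hfD heD
      · obtain ⟨v, hv, hve⟩ := exists_mem_dropLast_of_mem_edgeList he
        exact hw v hv (hD ⟨e, heD, hve⟩)
    · rintro z ⟨hzQ, hzS⟩
      have hz := mem_vertList_iff.2 (Or.inr hzQ)
      rw [vertList_cons, vertList_eq_dropLast_append, List.mem_cons, List.mem_append,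
        List.mem_singleton] at hz
      rcases hz with rfl | hz | rfl
      exacts [Or.inl rfl, absurd hzS (hw z hz), Or.inr rfl]

end Walk

open Walk

theorem IsPathSet.finite {x y : V} {P : Set E} (hP : G.IsPathSet x y P) : P.Finite := by
  obtain ⟨w, -, rfl⟩ := hP
  exact w.edgeList.finite_toSet

theorem IsCycleSet.finite {C : Set E} (hC : G.IsCycleSet C) : C.Finite := by
  obtain ⟨x, w, -, rfl⟩ := hC
  exact w.edgeList.finite_toSet

theorem IsCycleSet.nonempty {C : Set E} (hC : G.IsCycleSet C) : C.Nonempty := by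
  obtain ⟨x, w, hw, rfl⟩ := hC
  exact List.exists_mem_of_ne_nil _ hw.1

theorem vSet_mono {X Y : Set E} (h : X ⊆ Y) : G.VSet X ⊆ G.VSet Y :=
  fun _ ⟨e, he, hv⟩ => ⟨e, h he, hv⟩

theorem IsPathSet.reverse {x y : V} {P : Set E} (hP : G.IsPathSet x y P) : G.IsPathSet y x P := by
  obtain ⟨w, hw, rfl⟩ := hP
  exact ⟨w.reverse, hw.reverse, by ext; simp [Walk.edgeSet]⟩

theorem IsPathSet.eq_or_mem_vSet_right {x y : V} {P : Set E} (hP : G.IsPathSet x y P) :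
    y = x ∨ y ∈ G.VSet P := by
  obtain ⟨w, -, rfl⟩ := hP
  exact mem_vertList_iff.1 w.end_mem_vertList

theorem IsPathSet.mem_vSet_right {x y : V} {P : Set E} (hP : G.IsPathSet x y P) (hxy : x ≠ y) :
    y ∈ G.VSet P :=
  hP.eq_or_mem_vSet_right.resolve_left hxy.symm

theorem IsPathSet.insert {a b c : V} {e : E} {P : Set E} (he : G.inc e = s(a, b))
    (hP : G.IsPathSet b c P) (hab : a ≠ b) (ha : a ∉ G.VSet P) :
    G.IsPathSet a c (insert e P) := by
  obtain ⟨p, hp, rfl⟩ := hP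
  refine ⟨cons e he p, List.nodup_cons.2 ⟨fun h => ?_, hp⟩, by ext; simp [Walk.edgeSet]⟩
  exact (mem_vertList_iff.1 h).elim hab ha

theorem IsPathSet.exists_split {a b y : V} {P : Set E} (hP : G.IsPathSet a b P)
    (hy : y = a ∨ y ∈ G.VSet P) :
    ∃ P₁ P₂, G.IsPathSet a y P₁ ∧ G.IsPathSet y b P₂ ∧ P = P₁ ∪ P₂ ∧ Disjoint P₁ P₂ ∧
      G.VSet P₁ ∩ G.VSet P₂ ⊆ {y} := by
  obtain ⟨p, hp, rfl⟩ := hP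
  obtain ⟨p₁, p₂, rfl⟩ := exists_eq_append_of_mem_vertList (mem_vertList_iff.2 hy)
  have hE := hp.edgeList_nodup
  have hV : (p₁.vertList.dropLast ++ p₂.vertList).Nodup := by rw [← vertList_append]; exact hp
  rw [edgeList_append] at hE
  refine ⟨p₁.edgeSet, p₂.edgeSet, ⟨p₁, hp.of_append_left, rfl⟩,
    ⟨p₂, hp.of_append_right, rfl⟩, by ext; simp [Walk.edgeSet],
    Set.disjoint_left.2 fun _ h₁ h₂ => List.disjoint_of_nodup_append hE h₁ h₂, ?_⟩
  rintro z ⟨h₁, h₂⟩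
  have h₁' : z ∈ p₁.vertList := mem_vertList_iff.2 (Or.inr h₁)
  rw [vertList_eq_dropLast_append, List.mem_append] at h₁'
  exact h₁'.elim (fun h => absurd (mem_vertList_iff.2 (Or.inr h₂))
    (List.disjoint_of_nodup_append hV h)) List.mem_singleton.1

theorem IsPathSet.eq_of_subset {x y : V} {P Q : Set E} (hP : G.IsPathSet x y P)
    (hQ : G.IsPathSet x y Q) (hQP : Q ⊆ P) : Q = P := by
  obtain ⟨p, hp, rfl⟩ := hP
  obtain ⟨q, hq, rfl⟩ := hQ
  exact hQP.antisymm fun _ he => hq.mem_edgeList_of_subset hp (fun _ h => hQP h) he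

theorem isCycleSet_union {x y : V} {P Q : Set E} (hxy : x ≠ y) (hP : G.IsPathSet x y P)
    (hQ : G.IsPathSet x y Q) (hPQ : Disjoint P Q) (hV : G.VSet P ∩ G.VSet Q ⊆ {x, y}) :
    G.IsCycleSet (P ∪ Q) := by
  obtain ⟨p, hp, rfl⟩ := hP
  obtain ⟨q, hq, rfl⟩ := hQ
  obtain ⟨l, hl⟩ := q.exists_vertList_eq_cons
  have hlx : x ∉ l ∧ l.Nodup := List.nodup_cons.1 (hl ▸ hq)
  have hpy : p.vertList.dropLast.Nodup ∧ y ∉ p.vertList.dropLast := by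
    have h : (p.vertList.dropLast ++ [y]).Nodup := p.vertList_eq_dropLast_append ▸ hp
    exact ⟨h.of_append_left,
      fun hy => List.disjoint_of_nodup_append h hy (List.mem_singleton_self y)⟩
  refine ⟨x, p.append q.reverse, ⟨?_, ?_, ?_⟩, by ext; simp [Walk.edgeSet]⟩
  · simpa using fun h _ => hxy (eq_of_edgeList_eq_nil h)
  · rw [edgeList_append, edgeList_reverse]
    refine hp.edgeList_nodup.append (List.nodup_reverse.2 hq.edgeList_nodup) fun e hep heq => ?_
    exact Set.disjoint_left.1 hPQ hep (List.mem_reverse.1 heq)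
  · rw [vertList_append, vertList_reverse, hl, List.reverse_cons,
      List.dropLast_append_of_ne_nil (by simp), List.dropLast_concat]
    refine hpy.1.append (List.nodup_reverse.2 hlx.2) fun z hzp hzq => ?_
    have hzq : z ∈ l := List.mem_reverse.1 hzq
    have hzx : z ≠ x := fun h => hlx.1 (h ▸ hzq)
    have hzP := (mem_vertList_iff.1 (List.dropLast_subset _ hzp)).resolve_left hzx
    have hzQ := (mem_vertList_iff.1 (hl ▸ List.mem_cons_of_mem x hzq)).resolve_left hzx
    exact (hV ⟨hzP, hzQ⟩).elim hzx fun h => hpy.2 (h ▸ hzp)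

theorem IsCycleSet.exists_isPathSet_diff_singleton {C : Set E} (hC : G.IsCycleSet C) {e : E}
    (he : e ∈ C) {x : V} (hx : x ∈ G.inc e) :
    ∃ y, G.inc e = s(x, y) ∧ G.IsPathSet y x (C \ {e}) := by
  obtain ⟨a, b, hab, hP⟩ : ∃ a b, G.inc e = s(a, b) ∧ G.IsPathSet b a (C \ {e}) := by
    obtain ⟨z, w, ⟨-, hE, hV⟩, rfl⟩ := hC
    obtain ⟨a, b, h, w₁, w₂, rfl⟩ := exists_eq_append_cons_of_mem_edgeList he
    rw [edgeList_append, edgeList_cons, List.nodup_append', List.nodup_cons] at hE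
    obtain ⟨-, ⟨he₂, -⟩, hdisj⟩ := hE
    have he₁ : e ∉ w₁.edgeList := fun h => hdisj h List.mem_cons_self
    refine ⟨a, b, h, w₂.append w₁, ?_, ?_⟩
    · rw [vertList_append, vertList_cons, List.dropLast_append_of_ne_nil (by simp),
        List.dropLast_cons_of_ne_nil w₂.vertList_ne_nil, ← List.singleton_append,
        ← List.append_assoc, ← vertList_eq_dropLast_append] at hV
      rw [IsPath, vertList_append]
      exact List.nodup_append_comm.1 hV
    · ext f
      simp only [Walk.edgeSet, edgeList_append, edgeList_cons, Set.mem_ofPred_eq, List.mem_append,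
        List.mem_cons, Set.mem_sdiff, Set.mem_singleton_iff]
      constructor
      · rintro (hf | hf)
        · exact ⟨Or.inr (Or.inr hf), fun h => he₂ (h ▸ hf)⟩
        · exact ⟨Or.inl hf, fun h => he₁ (h ▸ hf)⟩
      · rintro ⟨hf | hf | hf, hfe⟩
        exacts [Or.inr hf, absurd hf hfe, Or.inl hf]
  rw [hab, Sym2.mem_iff] at hx
  rcases hx with rfl | rfl
  · exact ⟨b, hab, hP⟩
  · exact ⟨a, hab.trans Sym2.eq_swap, hP.reverse⟩

theorem IsCycleSet.eq_of_subset {C D : Set E} (hC : G.IsCycleSet C) (hD : G.IsCycleSet D)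
    (hDC : D ⊆ C) : D = C := by
  obtain ⟨e, he⟩ := hD.nonempty
  obtain ⟨y, hy, hP⟩ := hC.exists_isPathSet_diff_singleton (hDC he) (Sym2.out_fst_mem (G.inc e))
  obtain ⟨y', hy', hQ⟩ := hD.exists_isPathSet_diff_singleton he (Sym2.out_fst_mem (G.inc e))
  obtain rfl := Sym2.congr_right.1 (hy'.symm.trans hy)
  have hPQ := hP.eq_of_subset hQ (Set.sdiff_subset_sdiff_left hDC)
  rw [← Set.insert_sdiff_self_of_mem he, ← Set.insert_sdiff_self_of_mem (hDC he), hPQ]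

theorem mem_vSet_insert {v : V} {e : E} {X : Set E} :
    v ∈ G.VSet (insert e X) ↔ v ∈ G.inc e ∨ v ∈ G.VSet X := by
  simp [VSet]

theorem IsCycleSet.exists_isPathSet_union {C : Set E} (hC : G.IsCycleSet C) {x y : V}
    (hxy : x ≠ y) (hx : x ∈ G.VSet C) (hy : y ∈ G.VSet C) :
    ∃ R₁ R₂, G.IsPathSet x y R₁ ∧ G.IsPathSet x y R₂ ∧ Disjoint R₁ R₂ ∧
      G.VSet R₁ ∩ G.VSet R₂ ⊆ {x, y} ∧ C = R₁ ∪ R₂ := by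
  obtain ⟨e, heC, hxe⟩ := hx
  obtain ⟨b, hb, hP⟩ := hC.exists_isPathSet_diff_singleton heC hxe
  have hyP : y = b ∨ y ∈ G.VSet (C \ {e}) := by
    obtain ⟨f, hfC, hyf⟩ := hy
    by_cases hfe : f = e
    · subst hfe
      rw [hb, Sym2.mem_iff] at hyf
      exact Or.inl (hyf.resolve_left hxy.symm)
    · exact Or.inr ⟨f, ⟨hfC, hfe⟩, hyf⟩
  obtain ⟨P₁, P₂, hP₁, hP₂, hP, hd, hV⟩ := hP.exists_split hyP
  have hby : b = y ∨ b ∈ G.VSet P₁ := hP₁.reverse.eq_or_mem_vSet_right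
  have hxP₁ : x ∉ G.VSet P₁ := fun h => hxy (hV ⟨h, hP₂.mem_vSet_right hxy.symm⟩)
  have hxb : x ≠ b := by
    rintro rfl
    exact hby.elim hxy hxP₁
  have heP₂ : e ∉ P₂ := fun h => (hP ▸ Set.subset_union_right h : e ∈ C \ {e}).2 rfl
  refine ⟨P₂, insert e P₁, hP₂.reverse, hP₁.insert hb hxb hxP₁, ?_, ?_, ?_⟩
  · exact Set.disjoint_insert_right.2 ⟨heP₂, hd.symm⟩
  · rintro z ⟨hz₂, hz₁⟩
    rcases mem_vSet_insert.1 hz₁ with hz | hz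
    · rw [hb, Sym2.mem_iff] at hz
      obtain rfl | rfl := hz
      · exact Or.inl rfl
      · exact Or.inr (hby.elim id fun h => hV ⟨h, hz₂⟩)
    · exact Or.inr (hV ⟨hz, hz₂⟩)
  · rw [Set.union_insert, Set.union_comm, ← hP, Set.insert_sdiff_singleton,
      Set.insert_eq_of_mem heC]

/-- An ear of the path `D \ {e}` on `C` has its ends on `C`, which it splits into the two other
paths of the theta. -/
theorem IsCycleSet.exists_isTheta {C D : Set E} (hC : G.IsCycleSet C) (hD : G.IsCycleSet D)
    {e : E} (heC : e ∈ C) (heD : e ∈ D) (hDC : ¬ D ⊆ C) :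
    ∃ x y R₁ R₂ Q, G.IsTheta x y R₁ R₂ Q ∧ C = R₁ ∪ R₂ ∧ e ∈ R₂ ∧ Q ⊆ D \ {e} := by
  obtain ⟨a, ha⟩ : ∃ a, a ∈ G.inc e := ⟨_, Sym2.out_fst_mem _⟩
  obtain ⟨b, hab, q, hq, hqD⟩ := hD.exists_isPathSet_diff_singleton heD ha
  have hqC : ∃ f ∈ q.edgeList, f ∉ C := by
    obtain ⟨f, hfD, hfC⟩ := Set.not_subset.1 hDC
    exact ⟨f, (hqD ▸ ⟨hfD, fun h => hfC (h ▸ heC)⟩ : f ∈ q.edgeSet), hfC⟩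
  obtain ⟨x, y, Q, hxy, hx, hy, hQ, hQq, hQC, hQV⟩ := hq.exists_ear subset_rfl
    ⟨e, heC, by rw [hab]; exact Sym2.mem_mk_right a b⟩ ⟨e, heC, ha⟩ hqC
  have hQD : Q ⊆ D \ {e} := hqD ▸ hQq
  obtain ⟨R₁, R₂, hR₁, hR₂, hR, hRV, rfl⟩ := hC.exists_isPathSet_union hxy hx hy
  have theta : ∀ {R R'}, G.IsPathSet x y R → G.IsPathSet x y R' → Disjoint R R' →
      G.VSet R ∩ G.VSet R' ⊆ {x, y} → R ⊆ R₁ ∪ R₂ → R' ⊆ R₁ ∪ R₂ → G.IsTheta x y R R' Q :=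
    fun hR hR' hd hV hRC hR'C => ⟨hxy, hR, hR', hQ, hd, (hQC.mono_right hR'C).symm,
      (hQC.mono_right hRC).symm, hV, fun z hz => hQV ⟨hz.2, vSet_mono hR'C hz.1⟩,
      fun z hz => hQV ⟨hz.2, vSet_mono hRC hz.1⟩⟩
  rcases heC with he | he
  · refine ⟨x, y, R₂, R₁, Q, theta hR₂ hR₁ hR.symm ?_ Set.subset_union_right
      Set.subset_union_left, Set.union_comm _ _, he, hQD⟩
    rwa [Set.inter_comm]
  · exact ⟨x, y, R₁, R₂, Q, theta hR₁ hR₂ hR hRV Set.subset_union_left Set.subset_union_right,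
      rfl, he, hQD⟩

theorem IsTheta.rotate {x y : V} {P₁ P₂ P₃ : Set E} (h : G.IsTheta x y P₁ P₂ P₃) :
    G.IsTheta x y P₂ P₃ P₁ := by
  obtain ⟨hxy, h₁, h₂, h₃, d₁₂, d₂₃, d₁₃, v₁₂, v₂₃, v₁₃⟩ := h
  exact ⟨hxy, h₂, h₃, h₁, d₂₃, d₁₃.symm, d₁₂.symm, v₂₃, Set.inter_comm _ _ ▸ v₁₃,
    Set.inter_comm _ _ ▸ v₁₂⟩

theorem IsTheta.isCycleSet_union₁₂ {x y : V} {P₁ P₂ P₃ : Set E} (h : G.IsTheta x y P₁ P₂ P₃) :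
    G.IsCycleSet (P₁ ∪ P₂) :=
  isCycleSet_union h.1 h.2.1 h.2.2.1 h.2.2.2.2.1 h.2.2.2.2.2.2.2.1

theorem IsTheta.isCycleSet_union₂₃ {x y : V} {P₁ P₂ P₃ : Set E} (h : G.IsTheta x y P₁ P₂ P₃) :
    G.IsCycleSet (P₂ ∪ P₃) :=
  h.rotate.isCycleSet_union₁₂

theorem IsTheta.isCycleSet_union₁₃ {x y : V} {P₁ P₂ P₃ : Set E} (h : G.IsTheta x y P₁ P₂ P₃) :
    G.IsCycleSet (P₁ ∪ P₃) :=
  Set.union_comm P₃ P₁ ▸ h.rotate.rotate.isCycleSet_union₁₂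

/-- `f` holds for an even number of the three cycles of every theta, i.e. the indicator of
`¬ f` is additive over thetas modulo 2. -/
def IsThetaAdditive (G : Multigraph V E) (f : Set E → Prop) : Prop :=
  ∀ x y P₁ P₂ P₃, G.IsTheta x y P₁ P₂ P₃ → (f (P₁ ∪ P₂) ↔ (f (P₁ ∪ P₃) ↔ f (P₂ ∪ P₃)))

theorem IsThetaAdditive.congr {f g : Set E → Prop} (hf : G.IsThetaAdditive f)
    (hfg : ∀ C, G.IsCycleSet C → (f C ↔ g C)) : G.IsThetaAdditive g := fun x y P₁ P₂ P₃ h => by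
  rw [← hfg _ h.isCycleSet_union₁₂, ← hfg _ h.isCycleSet_union₁₃, ← hfg _ h.isCycleSet_union₂₃]
  exact hf x y P₁ P₂ P₃ h

theorem isThetaAdditive_even_ncard_inter (Sg : Set E) :
    G.IsThetaAdditive fun C => Even (C ∩ Sg).ncard := by
  rintro x y P₁ P₂ P₃ ⟨-, h₁, h₂, h₃, d₁₂, d₂₃, d₁₃, -⟩
  have hadd : ∀ {P Q : Set E}, Disjoint P Q → P.Finite → Q.Finite →
      ((P ∪ Q) ∩ Sg).ncard = (P ∩ Sg).ncard + (Q ∩ Sg).ncard := fun hd hP hQ => by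
    rw [Set.union_inter_distrib_right]
    exact Set.ncard_union_eq (hd.mono Set.inter_subset_left Set.inter_subset_left)
      (hP.inter_of_left _) (hQ.inter_of_left _)
  simp only [hadd d₁₂ h₁.finite h₂.finite, hadd d₁₃ h₁.finite h₃.finite,
    hadd d₂₃ h₂.finite h₃.finite, Nat.even_add]
  tauto

def IsAcyclicSet (G : Multigraph V E) (T : Set E) : Prop := ∀ C ⊆ T, ¬ G.IsCycleSet C

theorem exists_maximal_isAcyclicSet (G : Multigraph V E) : ∃ T, Maximal G.IsAcyclicSet T := by
  have hF : Order.IsOfFiniteCharacter {T | G.IsAcyclicSet T} := fun T =>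
    ⟨fun hT S hST _ C hCS => hT C (hCS.trans hST),
      fun h C hCT hC => h C hCT hC.finite C subset_rfl hC⟩
  obtain ⟨T, -, hT⟩ := hF.exists_maximal (x := ∅) fun C hC h =>
    h.nonempty.ne_empty (Set.subset_empty_iff.1 hC)
  exact ⟨T, hT⟩

theorem exists_isCycleSet_of_maximal_isAcyclicSet {T : Set E} (hT : Maximal G.IsAcyclicSet T)
    {e : E} (he : e ∉ T) : ∃ C, G.IsCycleSet C ∧ C ⊆ insert e T ∧ e ∈ C := by
  have hne : ¬ G.IsAcyclicSet (insert e T) := fun h => he (hT.mem_of_prop_insert h)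
  simp only [IsAcyclicSet, not_forall, not_not] at hne
  obtain ⟨C, hCT, hC⟩ := hne
  refine ⟨C, hC, hCT, by_contra fun heC => hT.prop C (fun f hf => ?_) hC⟩
  exact (hCT hf).resolve_left fun h => heC (h ▸ hf)

theorem IsThetaAdditive.iff_of_iff_fundamental {f g : Set E → Prop} (hf : G.IsThetaAdditive f)
    (hg : G.IsThetaAdditive g) {T : Set E} (hT : G.IsAcyclicSet T) {F : E → Set E}
    (hF : ∀ e ∉ T, G.IsCycleSet (F e) ∧ F e ⊆ insert e T ∧ e ∈ F e)
    (hfg : ∀ e ∉ T, f (F e) ↔ g (F e)) {C : Set E} (hC : G.IsCycleSet C) : f C ↔ g C := by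
  induction hn : (C \ T).ncard using Nat.strong_induction_on generalizing C with
  | _ n ih =>
  obtain ⟨e, heC, heT⟩ := Set.sdiff_nonempty.2 fun h => hT C h hC
  obtain ⟨hFe, hFT, heF⟩ := hF e heT
  by_cases hFC : F e ⊆ C
  · rw [← hC.eq_of_subset hFe hFC]
    exact hfg e heT
  obtain ⟨x, y, R₁, R₂, Q, hθ, rfl, heR₂, hQ⟩ := hC.exists_isTheta hFe heC heF hFC
  have hQT : Q ⊆ T := fun f hf => (hFT (hQ hf).1).resolve_left (hQ hf).2
  have hlt : ∀ R ⊆ R₁ ∪ R₂, (∃ g ∈ R₁ ∪ R₂, g ∉ T ∧ g ∉ R) → ((R ∪ Q) \ T).ncard < n := by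
    rintro R hR ⟨g, hg, hgT, hgR⟩
    refine hn ▸ Set.ncard_lt_ncard ⟨?_, fun h => ?_⟩ hC.finite.sdiff
    · rintro z ⟨hz | hz, hzT⟩
      exacts [⟨hR hz, hzT⟩, absurd (hQT hz) hzT]
    · exact (h ⟨hg, hgT⟩).1.elim hgR fun hgQ => hgT (hQT hgQ)
  obtain ⟨g, hgRQ, hgT⟩ := Set.not_subset.1 fun h => hT _ h hθ.isCycleSet_union₁₃
  have hgR₁ : g ∈ R₁ := hgRQ.resolve_right fun h => hgT (hQT h)
  have hR : Disjoint R₁ R₂ := hθ.2.2.2.2.1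
  have h₁ : ((R₁ ∪ Q) \ T).ncard < n :=
    hlt R₁ Set.subset_union_left ⟨e, Or.inr heR₂, heT, Set.disjoint_right.1 hR heR₂⟩
  have h₂ : ((R₂ ∪ Q) \ T).ncard < n :=
    hlt R₂ Set.subset_union_right ⟨g, Or.inl hgR₁, hgT, Set.disjoint_left.1 hR hgR₁⟩
  rw [hf x y R₁ R₂ Q hθ, hg x y R₁ R₂ Q hθ, ih _ h₁ hθ.isCycleSet_union₁₃ rfl,
    ih _ h₂ hθ.isCycleSet_union₂₃ rfl]

theorem IsThetaAdditive.exists_signature {f : Set E → Prop} (hf : G.IsThetaAdditive f) :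
    ∃ Sg : Set E, ∀ C, G.IsCycleSet C → (f C ↔ Even (C ∩ Sg).ncard) := by
  obtain ⟨T, hT⟩ := G.exists_maximal_isAcyclicSet
  choose! F hF using fun e (he : e ∉ T) => exists_isCycleSet_of_maximal_isAcyclicSet hT he
  set Sg := {e | e ∉ T ∧ ¬ f (F e)}
  refine ⟨Sg, fun C hC => hf.iff_of_iff_fundamental (isThetaAdditive_even_ncard_inter Sg) hT.prop
    hF (fun e he => ?_) hC⟩
  obtain ⟨-, hFT, heF⟩ := hF e he
  have hFSg : F e ∩ Sg = {e' | e' = e ∧ ¬ f (F e)} := by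
    ext e'
    refine ⟨fun ⟨h₁, h₂, h₃⟩ => ?_, ?_⟩
    · obtain rfl := (hFT h₁).resolve_right h₂
      exact ⟨rfl, h₃⟩
    · rintro ⟨rfl, h⟩
      exact ⟨heF, he, h⟩
  by_cases h : f (F e) <;> simp [hFSg, h]

end Multigraph

namespace BiasedGraph

variable {V : Type u} {E : Type v}

theorem isThetaAdditive_balanced_iff (Ω : BiasedGraph V E) :
    Ω.toMultigraph.IsThetaAdditive Ω.Balanced ↔ ¬ ∃ X, Ω.IsContraTheta X := by
  refine ⟨?_, fun h x y P₁ P₂ P₃ hθ => ?_⟩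
  · rintro h ⟨_, x, y, P₁, P₂, P₃, hθ, h₁₂, h₂₃, h₁₃, rfl⟩
    exact h₁₂ ((h x y P₁ P₂ P₃ hθ).2 (iff_of_false h₁₃ h₂₃))
  have t₁ := Ω.theta_property x y P₁ P₂ P₃ hθ
  have t₂ := Ω.theta_property x y P₂ P₃ P₁ hθ.rotate
  have t₃ := Ω.theta_property x y P₃ P₁ P₂ hθ.rotate.rotate
  have hc : ¬ (¬ Ω.Balanced (P₁ ∪ P₂) ∧ ¬ Ω.Balanced (P₂ ∪ P₃) ∧ ¬ Ω.Balanced (P₁ ∪ P₃)) :=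
    fun ⟨h₁₂, h₂₃, h₁₃⟩ => h ⟨_, x, y, P₁, P₂, P₃, hθ, h₁₂, h₂₃, h₁₃, rfl⟩
  rw [Set.union_comm P₂ P₁, Set.union_comm P₃ P₁] at t₂
  rw [Set.union_comm P₃ P₁, Set.union_comm P₃ P₂] at t₃
  tauto

end BiasedGraph

/-- A biased graph is a signed graph iff it has no contrabalanced theta. -/
theorem stmt4 {V E : Type*} (Ω : BiasedGraph V E) :
    (∃ Sg : Set E, ∀ C, Ω.toMultigraph.IsCycleSet C →
        (Ω.Balanced C ↔ Even (C ∩ Sg).ncard)) ↔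
      ¬ ∃ X, Ω.IsContraTheta X := by
  rw [← Ω.isThetaAdditive_balanced_iff]
  refine ⟨fun ⟨Sg, hSg⟩ => ?_, fun h => h.exists_signature⟩
  exact (Multigraph.isThetaAdditive_even_ncard_inter Sg).congr fun C hC => (hSg C hC).symm
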